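/- Let s ≥ 1, let A be the 2^s × 2^s complex matrix with A_{k,k−1} = 1 for 1 ≤ k ≤ 2^s−1, A_{0,2^s−1} = −1 and all other entries 0, and let u₀ = (1, 0, …, 0)ᵀ ∈ ℂ^{2^s}. Then for a vector u ∈ ℂ^{2^s}, the system {A^r u : r = 0, 1, …, 2^s−1} is orthonormal in ℂ^{2^s} if and only if u = B u₀ for some unitary matrix B with AB = BA. Moreover, a unitary matrix B satisfies AB = BA if and only if B = C · diag(γ₀, …, γ_{2^s−1}) · C^{-1} for some complex numbers γ_r with |γ_r| = 1, where C is the unitary matrix whose r-th column is the vector v_r with coordinates (v_r)_l = 2^{-s/2} (−1)^l e^{−iπ(2r+1)l/2^s}; and in that case the coordinates of u = B u₀ are u_k = 2^{-s} (−1)^k Σ_{r=0}^{2^s−1} γ_r e^{−iπ(2r+1)k/2^s}. -/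

import Mathlib

/-- The `2^s × 2^s` matrix `A` with `A_{k,k−1} = 1` for `1 ≤ k ≤ 2^s−1`,
`A_{0,2^s−1} = −1`, and all other entries `0`. -/
def matA (s : ℕ) : Matrix (Fin (2 ^ s)) (Fin (2 ^ s)) ℂ :=
  fun k l => if (k : ℕ) = (l : ℕ) + 1 then 1
    else if (k : ℕ) = 0 ∧ (l : ℕ) = 2 ^ s - 1 then -1 else 0

/-- The vector `u₀ = (1, 0, …, 0)ᵀ`. -/
def u0 (s : ℕ) : Fin (2 ^ s) → ℂ := fun k => if k = 0 then 1 else 0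

/-- The eigenvectors `(v_r)_l = 2^{-s/2} (−1)^l e^{−iπ(2r+1)l/2^s}`. -/
noncomputable def vA (s : ℕ) (r : Fin (2 ^ s)) : Fin (2 ^ s) → ℂ :=
  fun l => (((2 : ℝ) ^ (-(s : ℝ) / 2) : ℝ) : ℂ) * (-1) ^ (l : ℕ) *
    Complex.exp (-(Real.pi : ℂ) * Complex.I * (2 * (r : ℕ) + 1) * (l : ℕ) / 2 ^ s)

/-- The unitary matrix `C` whose `r`-th column is the eigenvector `v_r`. -/
noncomputable def matC (s : ℕ) : Matrix (Fin (2 ^ s)) (Fin (2 ^ s)) ℂ :=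
  fun l r => vA s r l

/-!
For `r < 2 ^ s` we have `A ^ r u₀ = e_r`, so a matrix `B` commuting with `A` has `r`-th column
`A ^ r (B u₀)`: the orbit of `B u₀` is orthonormal exactly when `B` is unitary, and every `u` is
`B u₀` for the polynomial `B = ∑ u_j A ^ j` in `A`.

The vectors `v_r` are eigenvectors of `A` for the eigenvalues `λ_r = -ζ ^ (2r+1)`,
`ζ = e^{iπ/2^s}`, which are pairwise distinct since `ζ` is a primitive `2^(s+1)`-th root of
unity; they are orthonormal because `λ_r' / λ_r` is a `2^s`-th root of unity different from `1`
when `r ≠ r'`. So `C⋆ A C` is diagonal with distinct entries, `B` commutes with `A` iff `C⋆ B C` is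
diagonal, and such a `B` is unitary iff its diagonal entries have modulus one.
-/

open Complex Matrix Finset
open scoped Real

section UnitaryConjugation

variable {n : Type*} [Fintype n] [DecidableEq n]

theorem Matrix.mem_unitaryGroup_iff_columns (B : Matrix n n ℂ) :
    B ∈ unitaryGroup n ℂ ↔
      ∀ r r', ∑ l, B l r * starRingEnd ℂ (B l r') = if r = r' then 1 else 0 := by
  rw [mem_unitaryGroup_iff', ← Matrix.ext_iff, forall_comm]
  refine forall₂_congr fun r r' => ?_
  simp only [mul_apply, star_apply, one_apply, eq_comm (a := r'), RCLike.star_def, mul_comm]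

theorem Matrix.diagonal_mem_unitaryGroup_iff (γ : n → ℂ) :
    diagonal γ ∈ unitaryGroup n ℂ ↔ ∀ i, ‖γ i‖ = 1 := by
  rw [mem_unitaryGroup_iff', star_eq_conjTranspose, diagonal_conjTranspose,
    diagonal_mul_diagonal, ← diagonal_one, diagonal_eq_diagonal_iff]
  refine forall_congr' fun i => ?_
  rw [Pi.star_apply, RCLike.star_def, ← Complex.normSq_eq_conj_mul_self]
  norm_cast
  rw [normSq_eq_norm_sq, pow_eq_one_iff_of_nonneg (norm_nonneg _) two_ne_zero]

theorem Matrix.commute_diagonal_iff_of_injective {d : n → ℂ} (hd : Function.Injective d)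
    (M : Matrix n n ℂ) : Commute (diagonal d) M ↔ M = diagonal fun i => M i i := by
  constructor
  · intro h
    ext i j
    rcases eq_or_ne i j with rfl | hij
    · simp
    · have := congr_fun₂ h.eq i j
      rw [diagonal_mul, mul_diagonal] at this
      have : (d i - d j) * M i j = 0 := by linear_combination this
      simpa [diagonal_apply_ne _ hij, sub_eq_zero, hd.ne hij] using this
  · intro h
    rw [h]
    exact commute_diagonal d _

theorem Matrix.unitary_commute_conj_diagonal_iff {C : Matrix n n ℂ}
    (hC : C ∈ unitaryGroup n ℂ) {d : n → ℂ} (hd : Function.Injective d)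
    (B : Matrix n n ℂ) :
    B ∈ unitaryGroup n ℂ ∧ Commute (C * diagonal d * star C) B ↔
      ∃ γ : n → ℂ, (∀ i, ‖γ i‖ = 1) ∧ B = C * diagonal γ * star C := by
  set φ := Unitary.conjStarAlgAut ℂ (Matrix n n ℂ) ⟨C, hC⟩
  have hφ (M : Matrix n n ℂ) : φ M = C * M * star C := rfl
  obtain ⟨Γ, rfl⟩ : ∃ Γ, B = φ Γ := ⟨φ.symm B, (φ.apply_symm_apply B).symm⟩
  have hunit : φ Γ ∈ unitaryGroup n ℂ ↔ Γ ∈ unitaryGroup n ℂ :=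
    ⟨fun h => by simpa using Unitary.map_mem φ.symm h, Unitary.map_mem φ⟩
  rw [← hφ, hunit, commute_map_iff (f := φ) φ.injective, commute_diagonal_iff_of_injective hd]
  constructor
  · rintro ⟨hΓ, hdiag⟩
    refine ⟨fun i => Γ i i, (diagonal_mem_unitaryGroup_iff _).1 (hdiag ▸ hΓ), ?_⟩
    rw [← hφ, ← hdiag]
  · rintro ⟨γ, hγ, h⟩
    obtain rfl : Γ = diagonal γ := φ.injective h
    exact ⟨(diagonal_mem_unitaryGroup_iff γ).2 hγ, by simp⟩

end UnitaryConjugation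

theorem u0_eq_single (s : ℕ) : u0 s = Pi.single 0 1 := by
  ext k
  simp [u0, Pi.single_apply]

section Orbit

variable {s : ℕ}

theorem matA_mulVec_single_one {j : Fin (2 ^ s)} (hj : (j : ℕ) + 1 < 2 ^ s) :
    matA s *ᵥ Pi.single j 1 = Pi.single ⟨j + 1, hj⟩ 1 := by
  have hj' : (j : ℕ) ≠ 2 ^ s - 1 := by omega
  ext k
  simp only [mulVec_single_one, col_apply, matA, Pi.single_apply, Fin.ext_iff, hj', and_false,
    if_false]

theorem matA_pow_mulVec_u0 (r : Fin (2 ^ s)) : matA s ^ (r : ℕ) *ᵥ u0 s = Pi.single r 1 := by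
  obtain ⟨r, hr⟩ := r
  induction r with
  | zero => rw [pow_zero, one_mulVec, u0_eq_single]; rfl
  | succ r ih =>
    rw [pow_succ', ← mulVec_mulVec, ih (by omega), matA_mulVec_single_one hr]

theorem matA_pow_mulVec_mulVec_u0 {B : Matrix (Fin (2 ^ s)) (Fin (2 ^ s)) ℂ}
    (hB : Commute (matA s) B) (r : Fin (2 ^ s)) :
    matA s ^ (r : ℕ) *ᵥ (B *ᵥ u0 s) = B.col r := by
  rw [mulVec_mulVec, (hB.pow_left _).eq, ← mulVec_mulVec, matA_pow_mulVec_u0, mulVec_single_one]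

theorem orthonormal_orbit_iff_mem_unitaryGroup {B : Matrix (Fin (2 ^ s)) (Fin (2 ^ s)) ℂ}
    (hB : Commute (matA s) B) :
    (∀ r r' : Fin (2 ^ s),
      ∑ l, (matA s ^ (r : ℕ) *ᵥ (B *ᵥ u0 s)) l *
          starRingEnd ℂ ((matA s ^ (r' : ℕ) *ᵥ (B *ᵥ u0 s)) l) =
        if r = r' then 1 else 0) ↔ B ∈ unitaryGroup (Fin (2 ^ s)) ℂ := by
  simp only [matA_pow_mulVec_mulVec_u0 hB, col_apply]
  exact (mem_unitaryGroup_iff_columns B).symm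

theorem exists_commute_matA_mulVec_u0_eq (u : Fin (2 ^ s) → ℂ) :
    ∃ B, Commute (matA s) B ∧ B *ᵥ u0 s = u := by
  refine ⟨∑ j : Fin (2 ^ s), u j • matA s ^ (j : ℕ),
    Commute.sum_right _ _ _ fun j _ => ((Commute.refl _).pow_right _).smul_right _, ?_⟩
  simp only [sum_mulVec, smul_mulVec, matA_pow_mulVec_u0]
  exact (pi_eq_sum_univ' u).symm

theorem orthonormal_orbit_iff_exists_unitary (u : Fin (2 ^ s) → ℂ) :
    (∀ r r' : Fin (2 ^ s),
      ∑ l, (matA s ^ (r : ℕ) *ᵥ u) l * starRingEnd ℂ ((matA s ^ (r' : ℕ) *ᵥ u) l) =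
        if r = r' then 1 else 0) ↔
      ∃ B : Matrix (Fin (2 ^ s)) (Fin (2 ^ s)) ℂ,
        B ∈ unitaryGroup (Fin (2 ^ s)) ℂ ∧ matA s * B = B * matA s ∧ u = B *ᵥ u0 s := by
  constructor
  · intro h
    obtain ⟨B, hB, rfl⟩ := exists_commute_matA_mulVec_u0_eq u
    exact ⟨B, (orthonormal_orbit_iff_mem_unitaryGroup hB).1 h, hB, rfl⟩
  · rintro ⟨B, hBu, hB, rfl⟩
    exact (orthonormal_orbit_iff_mem_unitaryGroup hB).2 hBu

end Orbit

section Spectrum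

variable {s : ℕ}

noncomputable def unitRoot (s : ℕ) : ℂ := exp (π * I / 2 ^ s)

noncomputable def lam (s : ℕ) (r : Fin (2 ^ s)) : ℂ := -unitRoot s ^ (2 * (r : ℕ) + 1)

theorem isPrimitiveRoot_unitRoot (s : ℕ) : IsPrimitiveRoot (unitRoot s) (2 ^ (s + 1)) := by
  have : π * I / 2 ^ s = 2 * π * I / ((2 ^ (s + 1) : ℕ) : ℂ) := by push_cast; ring
  rw [unitRoot, this]
  exact Complex.isPrimitiveRoot_exp _ (by positivity)

theorem unitRoot_pow_two_pow (s : ℕ) : unitRoot s ^ 2 ^ s = -1 := by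
  rw [unitRoot, ← Complex.exp_nat_mul, Nat.cast_pow, Nat.cast_ofNat,
    mul_div_cancel₀ _ (pow_ne_zero _ two_ne_zero), exp_pi_mul_I]

theorem lam_pow_two_pow (hs : 1 ≤ s) (r : Fin (2 ^ s)) : lam s r ^ 2 ^ s = -1 := by
  have heven : Even (2 ^ s) := (Nat.even_pow' (by omega)).2 even_two
  rw [lam, neg_pow, heven.neg_one_pow, one_mul, ← pow_mul, mul_comm, pow_mul,
    unitRoot_pow_two_pow, Odd.neg_one_pow (odd_two_mul_add_one _)]

theorem lam_ne_zero (r : Fin (2 ^ s)) : lam s r ≠ 0 := by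
  simp [lam, unitRoot, Complex.exp_ne_zero]

theorem norm_lam (r : Fin (2 ^ s)) : ‖lam s r‖ = 1 := by
  simp [lam, (isPrimitiveRoot_unitRoot s).norm'_eq_one (by positivity)]

theorem lam_injective : Function.Injective (lam s) := by
  intro r r' h
  have := (isPrimitiveRoot_unitRoot s).pow_inj (by omega) (by omega) (neg_inj.1 h)
  exact Fin.ext (by omega)

theorem vA_apply (r l : Fin (2 ^ s)) :
    vA s r l = (((2 : ℝ) ^ (-(s : ℝ) / 2) : ℝ) : ℂ) * (lam s r)⁻¹ ^ (l : ℕ) := by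
  have hexp : exp (-(π : ℂ) * I * (2 * (r : ℕ) + 1) * (l : ℕ) / 2 ^ s) =
      (unitRoot s ^ ((2 * (r : ℕ) + 1) * l))⁻¹ := by
    rw [unitRoot, ← Complex.exp_nat_mul, ← Complex.exp_neg]
    push_cast
    ring_nf
  rw [lam, inv_neg, neg_pow, inv_pow, ← pow_mul, vA, mul_assoc, hexp]

theorem matA_mulVec_apply (v : Fin (2 ^ s) → ℂ) (k : Fin (2 ^ s)) :
    (matA s *ᵥ v) k = if (k : ℕ) = 0 then -v ⟨2 ^ s - 1, Nat.sub_one_lt_of_lt k.isLt⟩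
      else v ⟨k - 1, (Nat.sub_le _ _).trans_lt k.isLt⟩ := by
  have hk := k.isLt
  rw [mulVec, dotProduct]
  split_ifs with hk0
  · rw [Fintype.sum_eq_single ⟨2 ^ s - 1, by omega⟩ fun j hj => ?_]
    · simp only [matA, hk0, if_true, and_self]
      rw [if_neg (by omega), neg_one_mul]
    · simp only [ne_eq, Fin.ext_iff] at hj
      simp only [matA, hk0, hj, and_false, if_false]
      rw [if_neg (by omega), zero_mul]
  · rw [Fintype.sum_eq_single ⟨k - 1, by omega⟩ fun j hj => ?_]
    · simp only [matA]
      rw [if_pos (by omega), one_mul]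
    · simp only [ne_eq, Fin.ext_iff] at hj
      simp only [matA, hk0, false_and, if_false]
      rw [if_neg (by omega), zero_mul]

theorem matA_mulVec_vA (hs : 1 ≤ s) (r : Fin (2 ^ s)) :
    matA s *ᵥ vA s r = lam s r • vA s r := by
  have hμ : (lam s r)⁻¹ ^ 2 ^ s = -1 := by rw [inv_pow, lam_pow_two_pow hs, inv_neg, inv_one]
  have hlam := lam_ne_zero r
  ext k
  rw [matA_mulVec_apply, Pi.smul_apply, smul_eq_mul]
  split_ifs with hk0
  · have : (lam s r)⁻¹ ^ (2 ^ s - 1) = -lam s r := mul_right_cancel₀ (inv_ne_zero hlam) <| by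
      rw [pow_sub_one_mul (by positivity), hμ, neg_mul, mul_inv_cancel₀ hlam]
    simp only [vA_apply, hk0, pow_zero, this]
    ring
  · obtain ⟨j, hj⟩ : ∃ j, (k : ℕ) = j + 1 := ⟨k - 1, by omega⟩
    simp only [vA_apply, hj, add_tsub_cancel_right, pow_succ]
    field_simp

theorem two_rpow_neg_half_mul_self (s : ℕ) :
    (((2 : ℝ) ^ (-(s : ℝ) / 2) : ℝ) : ℂ) * (((2 : ℝ) ^ (-(s : ℝ) / 2) : ℝ) : ℂ) =
      (2 : ℂ) ^ (-(s : ℤ)) := by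
  rw [← ofReal_mul, ← Real.rpow_add two_pos, add_halves, Real.rpow_neg zero_le_two,
    Real.rpow_natCast, _root_.zpow_neg, zpow_natCast]
  push_cast
  rfl

theorem sum_vA_mul_conj_vA (hs : 1 ≤ s) (r r' : Fin (2 ^ s)) :
    ∑ l, vA s r l * starRingEnd ℂ (vA s r' l) = if r = r' then 1 else 0 := by
  set z := (lam s r)⁻¹ * lam s r'
  have hconj : starRingEnd ℂ (lam s r')⁻¹ = lam s r' := by
    rw [inv_eq_conj (norm_lam r'), conj_conj]
  have hterm (l : Fin (2 ^ s)) :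
      vA s r l * starRingEnd ℂ (vA s r' l) = 2 ^ (-(s : ℤ)) * z ^ (l : ℕ) := by
    rw [vA_apply, vA_apply, map_mul, map_pow, conj_ofReal, hconj, ← two_rpow_neg_half_mul_self,
      mul_pow]
    ring
  simp only [hterm, ← mul_sum]
  rw [Fin.sum_univ_eq_sum_range (fun l => z ^ l)]
  split_ifs with h
  · subst h
    simp [z, inv_mul_cancel₀ (lam_ne_zero r)]
  · have hz : z ≠ 1 := fun hz => h (lam_injective ((inv_mul_eq_one₀ (lam_ne_zero r)).1 hz))
    have hzN : z ^ 2 ^ s = 1 := by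
      rw [mul_pow, inv_pow, lam_pow_two_pow hs, lam_pow_two_pow hs, inv_mul_cancel₀ (by norm_num)]
    rw [geom_sum_eq hz, hzN, sub_self, zero_div, mul_zero]

theorem matC_mem_unitaryGroup (hs : 1 ≤ s) : matC s ∈ unitaryGroup (Fin (2 ^ s)) ℂ :=
  (mem_unitaryGroup_iff_columns _).2 (sum_vA_mul_conj_vA hs)

theorem matA_mul_matC (hs : 1 ≤ s) : matA s * matC s = matC s * diagonal (lam s) := by
  ext k r
  rw [mul_diagonal, mul_comm]
  exact congr_fun (matA_mulVec_vA hs r) k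

theorem matA_eq_conj_diagonal (hs : 1 ≤ s) :
    matA s = matC s * diagonal (lam s) * star (matC s) := by
  rw [← matA_mul_matC hs, mul_assoc, Unitary.mul_star_self_of_mem (matC_mem_unitaryGroup hs),
    mul_one]

end Spectrum

theorem conj_diagonal_mulVec_u0_apply {s : ℕ} (γ : Fin (2 ^ s) → ℂ) (k : Fin (2 ^ s)) :
    ((matC s * diagonal γ * star (matC s)) *ᵥ u0 s) k =
      (2 : ℂ) ^ (-(s : ℤ)) * (-1) ^ (k : ℕ) *
        ∑ r : Fin (2 ^ s), γ r *
          exp (-(π : ℂ) * I * (2 * (r : ℕ) + 1) * (k : ℕ) / 2 ^ s) := by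
  rw [u0_eq_single, mulVec_single_one, col_apply, mul_apply, mul_sum]
  refine sum_congr rfl fun r _ => ?_
  simp only [mul_diagonal, star_apply, matC, vA, RCLike.star_def, Fin.val_zero, pow_zero,
    Nat.cast_zero, mul_zero, zero_div, exp_zero, mul_one, conj_ofReal]
  rw [← two_rpow_neg_half_mul_self]
  ring

theorem orthonormal_orbit_characterization (s : ℕ) (hs : 1 ≤ s) :
    (∀ u : Fin (2 ^ s) → ℂ,
      (∀ r r' : Fin (2 ^ s),
        ∑ l, ((matA s ^ (r : ℕ)).mulVec u) l *
            (starRingEnd ℂ) (((matA s ^ (r' : ℕ)).mulVec u) l) =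
          if r = r' then 1 else 0) ↔
      ∃ B : Matrix (Fin (2 ^ s)) (Fin (2 ^ s)) ℂ,
        B ∈ Matrix.unitaryGroup (Fin (2 ^ s)) ℂ ∧
        matA s * B = B * matA s ∧ u = B.mulVec (u0 s)) ∧
    (∀ B : Matrix (Fin (2 ^ s)) (Fin (2 ^ s)) ℂ,
      (B ∈ Matrix.unitaryGroup (Fin (2 ^ s)) ℂ ∧ matA s * B = B * matA s) ↔
      ∃ γ : Fin (2 ^ s) → ℂ, (∀ r, ‖γ r‖ = 1) ∧
        B = matC s * Matrix.diagonal γ * (matC s)⁻¹) ∧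
    (∀ γ : Fin (2 ^ s) → ℂ, (∀ r, ‖γ r‖ = 1) →
      ∀ k : Fin (2 ^ s),
        ((matC s * Matrix.diagonal γ * (matC s)⁻¹).mulVec (u0 s)) k =
          (2 : ℂ) ^ (-(s : ℤ)) * (-1) ^ (k : ℕ) *
            ∑ r : Fin (2 ^ s), γ r *
              Complex.exp (-(Real.pi : ℂ) * Complex.I * (2 * (r : ℕ) + 1) * (k : ℕ) / 2 ^ s)) := by
  have hC := matC_mem_unitaryGroup hs
  have hCinv : (matC s)⁻¹ = star (matC s) := inv_eq_left_inv (Unitary.star_mul_self_of_mem hC)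
  refine ⟨orthonormal_orbit_iff_exists_unitary, fun B => ?_, fun γ _ k => ?_⟩
  · rw [hCinv, ← unitary_commute_conj_diagonal_iff hC lam_injective,
      ← matA_eq_conj_diagonal hs]
    rfl
  · rw [hCinv, conj_diagonal_mulVec_u0_apply]
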